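/- Let G be a connected chordal graph that is not complete, and let C be a maximal clique of G. Then the subgraph of G induced by the union of all maximal cliques other than C is connected. -/

import Mathlib

namespace Chordal

variable {V : Type*} [Fintype V]

/-- A closed walk has a chord: an edge of `G` joining two support vertices that is
not an edge of the walk. -/
def HasChord (G : SimpleGraph V) {u : V} (c : G.Walk u u) : Prop :=
  ∃ v w, v ∈ c.support ∧ w ∈ c.support ∧ G.Adj v w ∧ s(v, w) ∉ c.edges

/-- A graph is chordal if every cycle of length at least 4 has a chord. -/
def IsChordal (G : SimpleGraph V) : Prop :=
  ∀ ⦃u : V⦄ (c : G.Walk u u), c.IsCycle → 4 ≤ c.length → HasChord G c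

/-- A maximal clique of `G`. -/
def IsMaxClique (G : SimpleGraph V) (s : Set V) : Prop :=
  G.IsClique s ∧ ∀ t : Set V, G.IsClique t → s ⊆ t → s = t

/-- A maximal clique of the induced subgraph `G(W)`. -/
def IsMaxCliqueOn (G : SimpleGraph V) (W s : Set V) : Prop :=
  s ⊆ W ∧ G.IsClique s ∧ ∀ t : Set V, t ⊆ W → G.IsClique t → s ⊆ t → s = t

/-- There is a walk from `u` to `w` staying inside `W` and avoiding `S`. -/
def ReachWithin (G : SimpleGraph V) (W S : Set V) (u w : V) : Prop :=
  ∃ p : G.Walk u w, ∀ x ∈ p.support, x ∈ W ∧ x ∉ S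

/-- `S` separates `u` from `w` in the induced subgraph `G(W)`. -/
def SeparatesOn (G : SimpleGraph V) (W S : Set V) (u w : V) : Prop :=
  u ∈ W ∧ w ∈ W ∧ u ∉ S ∧ w ∉ S ∧ u ≠ w ∧ ¬ ReachWithin G W S u w

/-- `S` is a minimal vertex separator of the induced subgraph `G(W)`:
for some pair `u, w` it is an inclusion-minimal set separating `u` from `w`. -/
def IsMinSeparatorOn (G : SimpleGraph V) (W S : Set V) : Prop :=
  S ⊆ W ∧ ∃ u w, SeparatesOn G W S u w ∧ ∀ S' ⊂ S, ¬ SeparatesOn G W S' u w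

/-- `S` is a minimal vertex separator of `G`. -/
def IsMinSeparator (G : SimpleGraph V) (S : Set V) : Prop :=
  IsMinSeparatorOn G Set.univ S

/-- `S` is inclusion-minimal among the minimal vertex separators of `G`. -/
def IsInclMinSeparator (G : SimpleGraph V) (S : Set V) : Prop :=
  IsMinSeparator G S ∧ ∀ S' : Set V, IsMinSeparator G S' → S' ⊆ S → S' = S

/-- `Γ` is a connected component of `G(V \ S)`. -/
def IsCompOutside (G : SimpleGraph V) (S Γ : Set V) : Prop :=
  ∃ u, u ∉ S ∧ Γ = {w | ReachWithin G Set.univ S u w}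

/-- A vertex is simplicial if its neighborhood is a clique. -/
def IsSimplicial (G : SimpleGraph V) (v : V) : Prop :=
  G.IsClique (G.neighborSet v)

/-- The simplicial component of a clique `C`: the simplicial vertices of `G` in `C`. -/
def Simp (G : SimpleGraph V) (C : Set V) : Set V :=
  {v ∈ C | IsSimplicial G v}

/-- The non-simplicial component of a clique `C`. -/
def Sep (G : SimpleGraph V) (C : Set V) : Set V :=
  C \ Simp G C

/-- `C` is a boundary clique (simply separated clique): a maximal clique such that
`Sep C = C ∩ C'` for some other maximal clique `C'`. -/
def IsBoundaryClique (G : SimpleGraph V) (C : Set V) : Prop :=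
  IsMaxClique G C ∧ ∃ C' : Set V, IsMaxClique G C' ∧ C' ≠ C ∧ Sep G C = C ∩ C'

/-- The induced subgraph on `W`, kept on the same vertex type. -/
def restrictS (G : SimpleGraph V) (W : Set V) : SimpleGraph V where
  Adj u v := G.Adj u v ∧ u ∈ W ∧ v ∈ W
  symm := ⟨fun u v ⟨h, hu, hv⟩ => ⟨h.symm, hv, hu⟩⟩
  loopless := ⟨fun u ⟨h, _, _⟩ => G.irrefl h⟩

/-- The vertex subset `A` induces a connected subgraph of `T`. -/
def ConnOn {α : Type*} (T : SimpleGraph α) (A : Set α) : Prop :=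
  A.Nonempty ∧ ∀ u ∈ A, ∀ v ∈ A, ∃ p : T.Walk u v, ∀ x ∈ p.support, x ∈ A

/-- The induced subgraph `G(W)` is complete. -/
def CompleteOn (G : SimpleGraph V) (W : Set V) : Prop :=
  ∀ u ∈ W, ∀ v ∈ W, u ≠ v → G.Adj u v

/-- A clique tree of `G`: a tree on the maximal cliques of `G` satisfying the
junction property. -/
def IsCliqueTree (G : SimpleGraph V) (T : SimpleGraph {s : Set V // IsMaxClique G s}) : Prop :=
  T.IsTree ∧ ∀ (C₁ C₂ : {s : Set V // IsMaxClique G s}) (p : T.Walk C₁ C₂), p.IsPath →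
    ∀ C₃ ∈ p.support, C₁.val ∩ C₂.val ⊆ C₃.val

/-- A leaf (endpoint) of a graph: a vertex with exactly one neighbor. -/
def IsLeaf {α : Type*} (T : SimpleGraph α) (a : α) : Prop :=
  ∃! b, T.Adj a b

/-- The union of the cliques preceding position `k` in a sequence. -/
def prefUnion {K : ℕ} (f : Fin K → Set V) (k : Fin K) : Set V :=
  {v | ∃ j, j < k ∧ v ∈ f j}

/-- A perfect sequence of the maximal cliques of the induced subgraph `G(W)`:
an enumeration of the maximal cliques of `G(W)` with the running intersection property. -/
def IsPerfectSeqOn (G : SimpleGraph V) (W : Set V) {K : ℕ} (f : Fin K → Set V) : Prop :=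
  Function.Injective f ∧ (∀ s : Set V, IsMaxCliqueOn G W s ↔ ∃ k, f k = s) ∧
  ∀ k : Fin K, 0 < (k : ℕ) →
    G.IsClique (prefUnion f k ∩ f k) ∧ ∃ k' : Fin K, k' < k ∧ prefUnion f k ∩ f k ⊆ f k'

/-- A perfect sequence of the maximal cliques of `G`. -/
def IsPerfectSeq (G : SimpleGraph V) {K : ℕ} (f : Fin K → Set V) : Prop :=
  Function.Injective f ∧ (∀ s : Set V, IsMaxClique G s ↔ ∃ k, f k = s) ∧
  ∀ k : Fin K, 0 < (k : ℕ) →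
    G.IsClique (prefUnion f k ∩ f k) ∧ ∃ k' : Fin K, k' < k ∧ prefUnion f k ∩ f k ⊆ f k'

/-- The closed neighborhood of a vertex. -/
def closedNbhd (G : SimpleGraph V) (v : V) : Set V :=
  insert v (G.neighborSet v)

/- Every vertex outside `V(C(G) \ {C})` has all its neighbours in `C`. A walk between two vertices
of `V(C(G) \ {C})` therefore stays in the clique `C` whenever it leaves that set, and can be
shortcut by an edge of `C`. -/
theorem connOn_of_neighborSet_subset_isClique {α : Type*} {G : SimpleGraph α} {A C : Set α}
    (hG : G.Connected) (hA : A.Nonempty) (hC : G.IsClique C)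
    (hnbr : ∀ x ∉ A, G.neighborSet x ⊆ C) : ConnOn G A := by
  refine ⟨hA, fun u hu w hw => ?_⟩
  let R : α → Prop := fun x => ∃ p : G.Walk u x, ∀ y ∈ p.support, y ∈ A
  have extend : ∀ {x y}, R x → G.Adj x y → y ∈ A → R y := by
    rintro x y ⟨p, hp⟩ hxy hy
    refine ⟨p.concat hxy, fun z hz => ?_⟩
    rw [SimpleGraph.Walk.support_concat, List.mem_append, List.mem_singleton] at hz
    rcases hz with hz | rfl
    exacts [hp z hz, hy]
  -- Outside `A`, a vertex is reached through some vertex of `C` reached inside `A`.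
  let T : Set α := {x | R x ∨ (x ∉ A ∧ ∃ c ∈ C, R c)}
  have hT : ∀ x y, G.Adj x y → x ∈ T → y ∈ T := by
    rintro x y hxy (hx | ⟨hx, c, hc, hRc⟩)
    · by_cases hy : y ∈ A
      · exact .inl (extend hx hxy hy)
      · exact .inr ⟨hy, x, hnbr y hy hxy.symm, hx⟩
    · by_cases hy : y ∈ A
      · rcases eq_or_ne c y with rfl | hcy
        · exact .inl hRc
        · exact .inl (extend hRc (hC hc (hnbr x hx hxy) hcy) hy)
      · exact .inr ⟨hy, c, hc, hRc⟩
  have hwT : w ∈ T := by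
    by_contra hwT
    obtain ⟨d, -, hd, hd'⟩ := (hG.preconnected u w).some.exists_boundary_dart T
      (.inl ⟨.nil, by simpa using hu⟩) hwT
    exact hd' (hT _ _ d.adj hd)
  rcases hwT with hRw | ⟨hw', -⟩
  exacts [hRw, absurd hw hw']

/-- `V(C(G) \ {C})`. -/
def otherMaxCliquesUnion (G : SimpleGraph V) (C : Set V) : Set V :=
  {v | ∃ s : Set V, IsMaxClique G s ∧ s ≠ C ∧ v ∈ s}

theorem exists_isMaxClique_superset (G : SimpleGraph V) {t : Set V} (ht : G.IsClique t) :
    ∃ s, IsMaxClique G s ∧ t ⊆ s := by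
  obtain ⟨s, hs, hmax⟩ := Set.Finite.exists_maximalFor id {s : Set V | G.IsClique s ∧ t ⊆ s}
    (Set.toFinite _) ⟨t, ht, subset_rfl⟩
  exact ⟨s, ⟨hs.1, fun t' ht' hst' => le_antisymm hst' (hmax ⟨ht', hs.2.trans hst'⟩ hst')⟩, hs.2⟩

theorem neighborSet_subset_of_notMem_otherMaxCliquesUnion {G : SimpleGraph V} {C : Set V} {x : V}
    (hx : x ∉ otherMaxCliquesUnion G C) : G.neighborSet x ⊆ C := by
  intro y hxy
  obtain ⟨s, hs, hxys⟩ := exists_isMaxClique_superset G (G.isClique_pair.mpr fun _ => hxy)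
  obtain rfl : s = C := by
    by_contra hsC
    exact hx ⟨s, hs, hsC, hxys (by simp)⟩
  exact hxys (by simp)

theorem otherMaxCliquesUnion_nonempty {G : SimpleGraph V} {C : Set V} (hC : G.IsClique C)
    (hnc : ¬ CompleteOn G Set.univ) : (otherMaxCliquesUnion G C).Nonempty := by
  obtain ⟨v, hv⟩ : ∃ v, v ∉ C := by
    by_contra! hall
    exact hnc fun u _ w _ huw => hC (hall u) (hall w) huw
  obtain ⟨s, hs, hvs⟩ := exists_isMaxClique_superset G (G.isClique_singleton v)
  refine ⟨v, s, hs, ?_, hvs rfl⟩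
  rintro rfl
  exact hv (hvs rfl)

theorem connOn_union_of_other_maxcliques_general {V : Type*} [Fintype V]
    (G : SimpleGraph V) (hconn : G.Connected)
    (hnc : ¬ CompleteOn G Set.univ) (C : Set V) (hC : IsMaxClique G C) :
    ConnOn G {v | ∃ s : Set V, IsMaxClique G s ∧ s ≠ C ∧ v ∈ s} :=
  connOn_of_neighborSet_subset_isClique hconn (otherMaxCliquesUnion_nonempty hC.1 hnc) hC.1
    fun _ => neighborSet_subset_of_notMem_otherMaxCliquesUnion

theorem connOn_union_of_other_maxcliques {V : Type*} [Fintype V]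
    (G : SimpleGraph V) (hconn : G.Connected) (hch : IsChordal G)
    (hnc : ¬ CompleteOn G Set.univ) (C : Set V) (hC : IsMaxClique G C) :
    ConnOn G {v | ∃ s : Set V, IsMaxClique G s ∧ s ≠ C ∧ v ∈ s} :=
  connOn_union_of_other_maxcliques_general G hconn hnc C hC

end Chordal
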